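/- arXiv:1705.03801 — 2 statements merged into one kernel-verified Lean document; each statement's English description precedes it below -/
import Mathlib

section
/- Let M_1, M_2, … be nonnegative real random variables and for each i let X_i be mixed Poisson with mixing variable M_i, i.e. the law of X_i is given by P(X_i = j) = E[e^{−M_i} M_i^j / j!] for j ∈ ℕ. If M_i converges in distribution to a constant λ ∈ [0,∞), then the total variation distance between the law of X_i and the Poisson(λ) distribution converges to 0 as i → ∞, i.e. (1/2) Σ_{j=0}^∞ | P(X_i = j) − e^{−λ} λ^j / j! | → 0. -/
/-!
For `0 ≤ x ≤ y` the splitting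
`e^{-x} x^j - e^{-y} y^j = (e^{-x} - e^{-y}) x^j - e^{-y} (y^j - x^j)` writes the difference of
the Poisson weights as a difference of two nonnegative sequences, each summing (after dividing
by `j!`) to `1 - e^{x-y}`; hence `∑_j |Po(x){j} - Po(y){j}| ≤ 2 (1 - e^{-|x-y|})`.
Averaging over the mixing variable, the ℓ¹ distance between the mixed Poisson law and `Po(λ)`
is at most `E[2 (1 - e^{-|M_i - λ|})]`, the expectation of a bounded continuous function of
`M_i` vanishing at `λ`, which tends to `0` by convergence in distribution.
-/

open MeasureTheory Filter Topology Real
open scoped Nat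

noncomputable def poissonProb (x : ℝ) (j : ℕ) : ℝ := exp (-x) * x ^ j / j !

lemma hasSum_pow_div_factorial (x : ℝ) : HasSum (fun j : ℕ => x ^ j / j !) (exp x) := by
  rw [exp_eq_exp_ℝ]
  exact NormedSpace.expSeries_div_hasSum_exp x

lemma poissonProb_nonneg {x : ℝ} (hx : 0 ≤ x) (j : ℕ) : 0 ≤ poissonProb x j := by
  unfold poissonProb
  positivity

lemma poissonProb_le_one {x : ℝ} (hx : 0 ≤ x) (j : ℕ) : poissonProb x j ≤ 1 := by
  calc poissonProb x j = exp (-x) * (x ^ j / j !) := mul_div_assoc _ _ _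
    _ ≤ exp (-x) * exp x := by gcongr; exact Real.pow_div_factorial_le_exp x hx j
    _ = 1 := by rw [← exp_add, neg_add_cancel, exp_zero]

lemma measurable_poissonProb (j : ℕ) : Measurable fun x => poissonProb x j := by
  unfold poissonProb
  fun_prop

lemma summable_poissonProb (x : ℝ) : Summable (poissonProb x) :=
  ((hasSum_pow_div_factorial x).summable.mul_left (exp (-x))).congr fun _ =>
    (mul_div_assoc _ _ _).symm

lemma abs_poissonProb_sub_le_of_le {x y : ℝ} (hx : 0 ≤ x) (hxy : x ≤ y) (j : ℕ) :
    |poissonProb x j - poissonProb y j|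
      ≤ (exp (-x) - exp (-y)) * (x ^ j / j !) + exp (-y) * ((y ^ j - x ^ j) / j !) := by
  have hexp : 0 ≤ exp (-x) - exp (-y) := sub_nonneg.2 (exp_le_exp.2 (neg_le_neg hxy))
  have hpow : 0 ≤ (y ^ j - x ^ j) / j ! := div_nonneg (sub_nonneg.2 (by gcongr)) (by positivity)
  calc |poissonProb x j - poissonProb y j|
      = |(exp (-x) - exp (-y)) * (x ^ j / j !) - exp (-y) * ((y ^ j - x ^ j) / j !)| := by
        congr 1
        rw [poissonProb, poissonProb]
        ring
    _ ≤ _ := abs_sub _ _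
    _ = _ := by rw [abs_of_nonneg (by positivity), abs_of_nonneg (by positivity)]

lemma summable_abs_poissonProb_sub (x y : ℝ) :
    Summable fun j => |poissonProb x j - poissonProb y j| :=
  ((summable_poissonProb x).sub (summable_poissonProb y)).abs

lemma tsum_abs_poissonProb_sub_le_of_le {x y : ℝ} (hx : 0 ≤ x) (hxy : x ≤ y) :
    ∑' j, |poissonProb x j - poissonProb y j| ≤ 2 * (1 - exp (x - y)) := by
  have hsum : HasSum
      (fun j : ℕ => (exp (-x) - exp (-y)) * (x ^ j / j !)
        + exp (-y) * ((y ^ j - x ^ j) / j !))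
      ((exp (-x) - exp (-y)) * exp x + exp (-y) * (exp y - exp x)) :=
    ((hasSum_pow_div_factorial x).mul_left _).add <| by
      simpa only [sub_div] using
        ((hasSum_pow_div_factorial y).sub (hasSum_pow_div_factorial x)).mul_left (exp (-y))
  have hvalue : (exp (-x) - exp (-y)) * exp x + exp (-y) * (exp y - exp x)
      = 2 * (1 - exp (x - y)) := by
    simp only [sub_eq_add_neg x y, exp_add, exp_neg]
    field_simp
    ring
  rw [← hvalue]
  exact hasSum_le (abs_poissonProb_sub_le_of_le hx hxy)
    (summable_abs_poissonProb_sub x y).hasSum hsum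

lemma tsum_abs_poissonProb_sub_le {x y : ℝ} (hx : 0 ≤ x) (hy : 0 ≤ y) :
    ∑' j, |poissonProb x j - poissonProb y j| ≤ 2 * (1 - exp (-|x - y|)) := by
  rcases le_total x y with hxy | hyx
  · rw [abs_of_nonpos (sub_nonpos.2 hxy), neg_neg]
    exact tsum_abs_poissonProb_sub_le_of_le hx hxy
  · rw [abs_of_nonneg (sub_nonneg.2 hyx), neg_sub]
    simp_rw [abs_sub_comm (poissonProb x _)]
    exact tsum_abs_poissonProb_sub_le_of_le hy hyx

noncomputable def poissonDistBound (y : ℝ) : BoundedContinuousFunction ℝ ℝ :=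
  BoundedContinuousFunction.ofNormedAddCommGroup (fun x => 2 * (1 - exp (-|x - y|)))
    (by fun_prop) 2 fun x => by
      have h₀ : 0 < exp (-|x - y|) := exp_pos _
      have h₁ : exp (-|x - y|) ≤ 1 := exp_le_one_iff.2 (neg_nonpos.2 (abs_nonneg _))
      rw [Real.norm_of_nonneg (by linarith)]
      linarith

@[simp]
lemma poissonDistBound_apply (y x : ℝ) : poissonDistBound y x = 2 * (1 - exp (-|x - y|)) := rfl

lemma poissonDistBound_self (y : ℝ) : poissonDistBound y y = 0 := by simp

lemma tsum_abs_integral_le_integral {Ω : Type*} [MeasurableSpace Ω] {μ : Measure Ω}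
    {F : ℕ → Ω → ℝ} {g : Ω → ℝ} (hF : ∀ j, Integrable (F j) μ) (hg : Integrable g μ)
    (hFs : ∀ ω, Summable fun j => |F j ω|) (hFg : ∀ ω, ∑' j, |F j ω| ≤ g ω) :
    ∑' j, |∫ ω, F j ω ∂μ| ≤ ∫ ω, g ω ∂μ := by
  refine Real.tsum_le_of_sum_le (fun j => abs_nonneg _) fun s => ?_
  calc ∑ j ∈ s, |∫ ω, F j ω ∂μ| ≤ ∑ j ∈ s, ∫ ω, |F j ω| ∂μ :=
        Finset.sum_le_sum fun j _ => abs_integral_le_integral_abs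
    _ = ∫ ω, ∑ j ∈ s, |F j ω| ∂μ := (integral_finsetSum s fun j _ => (hF j).abs).symm
    _ ≤ ∫ ω, g ω ∂μ :=
        integral_mono (integrable_finsetSum s fun j _ => (hF j).abs) hg fun ω =>
          ((hFs ω).sum_le_tsum s fun j _ => abs_nonneg _).trans (hFg ω)

lemma tsum_abs_integral_poissonProb_sub_le {Ω : Type*} [MeasurableSpace Ω] (P : Measure Ω)
    [IsProbabilityMeasure P] {X : Ω → ℝ} (hX : Measurable X) (hX₀ : ∀ ω, 0 ≤ X ω) {y : ℝ}
    (hy : 0 ≤ y) :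
    ∑' j, |(∫ ω, poissonProb (X ω) j ∂P) - poissonProb y j|
      ≤ ∫ ω, poissonDistBound y (X ω) ∂P := by
  have hint : ∀ j, Integrable (fun ω => poissonProb (X ω) j) P := fun j =>
    (integrable_const 1).mono' ((measurable_poissonProb j).comp hX).aestronglyMeasurable
      (.of_forall fun ω => by
        rw [Real.norm_of_nonneg (poissonProb_nonneg (hX₀ ω) j)]
        exact poissonProb_le_one (hX₀ ω) j)
  have hshift : ∀ j, (∫ ω, poissonProb (X ω) j ∂P) - poissonProb y j
      = ∫ ω, (poissonProb (X ω) j - poissonProb y j) ∂P := fun j => by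
    rw [integral_sub (hint j) (integrable_const _), integral_const]
    simp
  simp_rw [hshift]
  exact tsum_abs_integral_le_integral (fun j => (hint j).sub (integrable_const _))
    (((poissonDistBound y).integrable _).comp_measurable hX)
    (fun ω => summable_abs_poissonProb_sub _ _)
    (fun ω => tsum_abs_poissonProb_sub_le (hX₀ ω) hy)

/-- **Convergence of mixed Poisson random variables.**
Let `M 1, M 2, …` be nonnegative real random variables and let `X i` be mixed Poisson
with mixing variable `M i`, i.e. `P(X i = j) = E[exp (-M i) * (M i)^j / j!]`.  If `M i`
converges in distribution to a constant `λ ≥ 0` (tested against bounded continuous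
functions), then the total variation distance
`(1/2) ∑_j |P(X i = j) - exp (-λ) λ^j / j!|` between the law of `X i` and the
Poisson `λ` distribution tends to `0`. -/
theorem mixedPoisson_tendsto_of_tendsto_const
    {Ω : Type*} [MeasurableSpace Ω] (P : Measure Ω) [IsProbabilityMeasure P]
    (M : ℕ → Ω → ℝ) (hMmeas : ∀ i, Measurable (M i)) (hMnn : ∀ i ω, 0 ≤ M i ω)
    (lam : ℝ) (hlam : 0 ≤ lam)
    (hconv : ∀ f : BoundedContinuousFunction ℝ ℝ,
      Tendsto (fun i => ∫ ω, f (M i ω) ∂P) atTop (𝓝 (f lam))) :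
    Tendsto (fun i => (1 / 2 : ℝ) * ∑' j : ℕ,
        |(∫ ω, Real.exp (-(M i ω)) * (M i ω) ^ j / (Nat.factorial j) ∂P)
          - Real.exp (-lam) * lam ^ j / (Nat.factorial j)|)
      atTop (𝓝 0) := by
  have hdist : Tendsto (fun i => ∑' j, |(∫ ω, poissonProb (M i ω) j ∂P) - poissonProb lam j|)
      atTop (𝓝 0) := by
    have hlim := hconv (poissonDistBound lam)
    rw [poissonDistBound_self] at hlim
    exact squeeze_zero (fun i => tsum_nonneg fun j => abs_nonneg _)
      (fun i => tsum_abs_integral_poissonProb_sub_le P (hMmeas i) (hMnn i) hlam) hlim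
  have hhalf := hdist.const_mul (1 / 2 : ℝ)
  rwa [mul_zero] at hhalf
end

section
/- Let w_in, w_out : ℕ → (0,∞) be a fixed weight sequence and (L_N)_{N ∈ ℕ} positive reals with L_N → ∞, (1/L_N) Σ_{u=1}^N w_in u → 1 and (1/L_N) Σ_{u=1}^N w_out u → 1 as N → ∞. Fix k ∈ ℕ and distinct vertices v(1), …, v(k) ∈ ℕ. For each N ≥ max_i v(i), let (E_N(v,u))_{v,u ∈ [N]} be independent with E_N(v,u) ~ Poisson(w_out v · w_in u / L_N), and set D_in^N(v) = Σ_{u ∈ [N], u ≠ v} E_N(u,v) and D_out^N(v) = Σ_{u ∈ [N], u ≠ v} E_N(v,u). Then the joint law of ((D_in^N(v(1)), D_out^N(v(1))), …, (D_in^N(v(k)), D_out^N(v(k)))) on ℕ^{2k} converges weakly, as N → ∞, to the product measure ⊗_{i=1}^k ( Poisson(w_in v(i)) ⊗ Poisson(w_out v(i)) ); in particular the 2k limiting coordinates are independent. -/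
/-!
Write `V` for the set of the fixed vertices. Arcs between two distinct vertices of `V` have
means `O(1 / L_N)`, so with probability tending to one there are none, and then the degrees of
the `v i` only count arcs to and from `[N] \ V`. These arc sets are pairwise disjoint, so the
restricted degrees are independent sums of independent Poisson variables, i.e. independent
Poisson variables with means `w_in (v i) · Σ_{u ∉ V} w_out u / L_N → w_in (v i)` and
`w_out (v i) · Σ_{u ∉ V} w_in u / L_N → w_out (v i)`; the Poisson point masses are continuous
in the mean.
-/

open MeasureTheory ProbabilityTheory Filter Topology Function
open scoped NNReal ENNReal

lemma Finset.sum_sdiff_eq_sum_erase_of_eq_zero {α M : Type*} [DecidableEq α] [AddCommMonoid M]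
    {s V : Finset α} {a : α} {f : α → M} (ha : a ∈ V) (hf : ∀ x ∈ V, x ≠ a → f x = 0) :
    ∑ x ∈ s \ V, f x = ∑ x ∈ s.erase a, f x :=
  Finset.sum_subset (fun x hx => Finset.mem_erase.2 ⟨fun h => (Finset.mem_sdiff.1 hx).2 (h ▸ ha),
    (Finset.mem_sdiff.1 hx).1⟩) fun x hx hxV => hf x (by simp_all) (Finset.ne_of_mem_erase hx)

lemma NNReal.tendsto_sum_sdiff_mul_div {α γ : Type*} [DecidableEq α] {l : Filter γ}
    {w : α → ℝ≥0} {L : γ → ℝ≥0} {s : γ → Finset α} {V : Finset α} (hV : ∀ᶠ n in l, V ⊆ s n)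
    (hL : Tendsto (fun n => (L n : ℝ)) l atTop)
    (hw : Tendsto (fun n => ((∑ u ∈ s n, w u : ℝ≥0) : ℝ) / L n) l (𝓝 1)) (c : ℝ≥0) :
    Tendsto (fun n => ∑ u ∈ s n \ V, w u * c / L n) l (𝓝 c) := by
  have hV0 := tendsto_const_nhds (x := ((∑ u ∈ V, w u : ℝ≥0) : ℝ)).div_atTop hL
  have hsdiff : Tendsto (fun n => (∑ u ∈ s n \ V, w u) / L n) l (𝓝 1) := by
    rw [← NNReal.tendsto_coe]
    refine (sub_zero (1 : ℝ) ▸ hw.sub hV0).congr' (hV.mono fun n hn => ?_)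
    push_cast
    rw [Finset.sum_sdiff_eq_sub hn]
    ring
  simpa [← Finset.sum_mul, mul_div_right_comm, ← Finset.sum_div] using hsdiff.mul_const c

lemma NNReal.tendsto_const_div_atTop {γ : Type*} {l : Filter γ} {L : γ → ℝ≥0}
    (hL : Tendsto (fun n => (L n : ℝ)) l atTop) (c : ℝ≥0) :
    Tendsto (fun n => c / L n) l (𝓝 0) := by
  rw [← NNReal.tendsto_coe]
  simpa using tendsto_const_nhds (x := (c : ℝ)).div_atTop hL

namespace MeasureTheory

theorem tendsto_measure_preimage_of_tendsto_measure_ne {Ω α γ : Type*} {mΩ : MeasurableSpace Ω}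
    {P : Measure Ω} {l : Filter γ} {f g : γ → Ω → α} {s : Set α} {c : ℝ≥0∞}
    (hfg : Tendsto (fun n => P {ω | f n ω ≠ g n ω}) l (𝓝 0))
    (hg : Tendsto (fun n => P (g n ⁻¹' s)) l (𝓝 c)) :
    Tendsto (fun n => P (f n ⁻¹' s)) l (𝓝 c) := by
  have hsub n : symmDiff (f n ⁻¹' s) (g n ⁻¹' s) ⊆ {ω | f n ω ≠ g n ω} := by
    rintro ω (⟨hf, hg⟩ | ⟨hg, hf⟩) heq <;> simp_all
  have hlow : Tendsto (fun n => P (g n ⁻¹' s) - P {ω | f n ω ≠ g n ω}) l (𝓝 c) := by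
    simpa using ENNReal.Tendsto.sub hg hfg (Or.inr ENNReal.zero_ne_top)
  have hup : Tendsto (fun n => P (g n ⁻¹' s) + P {ω | f n ω ≠ g n ω}) l (𝓝 c) := by
    simpa using hg.add hfg
  refine tendsto_of_tendsto_of_tendsto_of_le_of_le hlow hup (fun n => ?_) fun n => ?_
  · rw [tsub_le_iff_right]
    exact tsub_le_iff_left.1 <|
      le_measure_symmDiff.trans (measure_mono ((symmDiff_comm _ _).subset.trans (hsub n)))
  · exact tsub_le_iff_left.1 <| le_measure_symmDiff.trans (measure_mono (hsub n))

end MeasureTheory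

namespace ProbabilityTheory

section DisjointBlocks

variable {Ω ι κ β : Type*} {mΩ : MeasurableSpace Ω} {μ : Measure Ω} {mβ : MeasurableSpace β}
  {X : ι → Ω → β}

theorem iIndepFun.iIndepFun_finset {t : κ → Finset ι} (ht : Pairwise (Disjoint on t))
    (h : iIndepFun X μ) (hX : ∀ i, AEMeasurable (X i) μ) :
    iIndepFun (fun j ω (p : t j) => X p ω) μ := by
  classical
  rw [iIndepFun_iff_measure_inter_preimage_eq_mul]
  intro S
  induction S using Finset.induction_on with
  | empty => simp [h.isProbabilityMeasure]
  | insert q S hq ih =>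
    intro s hs
    set T := S.biUnion t
    have hqT : Disjoint (t q) T :=
      (Finset.disjoint_biUnion_right _ _ _).2 fun j hj => ht fun hqj => hq (hqj ▸ hj)
    let M : Set (T → β) :=
      ⋂ j : S, (fun g (p : t j) => g ⟨p, Finset.mem_biUnion.2 ⟨j, j.2, p.2⟩⟩) ⁻¹' s j
    have hM : MeasurableSet M :=
      .iInter fun j => (by fun_prop : Measurable _) (hs j (Finset.mem_insert_of_mem j.2))
    have hST : ⋂ j ∈ S, (fun ω (p : t j) => X p ω) ⁻¹' s j = (fun ω (p : T) => X p ω) ⁻¹' M := by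
      ext ω
      simp [M]
    have hind := h.indepFun_finset₀ _ _ hqT hX
    rw [Finset.set_biInter_insert, hST, hind.measure_inter_preimage_eq_mul _ _
      (hs q (Finset.mem_insert_self q S)) hM, ← hST,
      ih fun j hj => hs j (Finset.mem_insert_of_mem hj), Finset.prod_insert hq]

theorem iIndepFun.iIndepFun_finsetSum [AddCommMonoid β] [MeasurableAdd₂ β] {t : κ → Finset ι}
    (ht : Pairwise (Disjoint on t)) (h : iIndepFun X μ) (hX : ∀ i, AEMeasurable (X i) μ) :
    iIndepFun (fun j => ∑ p ∈ t j, X p) μ := by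
  have := (h.iIndepFun_finset ht hX).comp (fun j (g : t j → β) => ∑ p, g p) fun j => by fun_prop
  convert this using 2 with j
  ext ω
  simp only [Finset.sum_apply, comp_apply]
  exact (Finset.sum_coe_sort (t j) fun p => X p ω).symm

end DisjointBlocks

section Poisson

variable {Ω : Type*} {mΩ : MeasurableSpace Ω} {P : Measure Ω}

lemma poissonMeasure_zero : Po(0) = Measure.dirac 0 := by
  refine Measure.ext_iff_singleton.2 fun n => ?_
  rcases n with _ | n <;> simp [poissonMeasure_singleton]

theorem iIndepFun.hasLaw_finsetSum_poissonMeasure {ι : Type*} {X : ι → Ω → ℕ} {r : ι → ℝ≥0}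
    (h : iIndepFun X P) (hX : ∀ i, HasLaw (X i) Po(r i) P) (s : Finset ι) :
    HasLaw (∑ i ∈ s, X i) Po(∑ i ∈ s, r i) P := by
  classical
  induction s using Finset.induction_on with
  | empty =>
    have := h.isProbabilityMeasure
    simpa [poissonMeasure_zero] using hasLaw_dirac_of_ae_eq (X := (0 : Ω → ℕ)) (P := P) (x := 0)
      (by rfl)
  | insert i s hi ih =>
    rw [Finset.sum_insert hi, Finset.sum_insert hi, add_comm, add_comm (r i)]
    exact (h.indepFun_finsetSum_of_notMem₀ (fun j => (hX j).aemeasurable) hi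
      ).hasLaw_add_poissonMeasure ih (hX i)

lemma poissonMeasure_compl_zero_le (r : ℝ≥0) : Po(r) {0}ᶜ ≤ r := by
  rw [prob_compl_eq_one_sub (measurableSet_singleton 0), poissonMeasure_singleton,
    tsub_le_iff_right, ← ENNReal.ofReal_coe_nnreal,
    ← ENNReal.ofReal_add r.coe_nonneg (by positivity)]
  refine ENNReal.one_le_ofReal.2 ?_
  simpa [add_comm] using Real.add_one_le_exp (-r : ℝ)

lemma tendsto_measure_ne_zero_of_hasLaw_poissonMeasure {γ : Type*} {l : Filter γ}
    {X : γ → Ω → ℕ} {r : γ → ℝ≥0} (hX : ∀ᶠ n in l, HasLaw (X n) Po(r n) P)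
    (hr : Tendsto r l (𝓝 0)) :
    Tendsto (fun n => P {ω | X n ω ≠ 0}) l (𝓝 0) := by
  refine tendsto_of_tendsto_of_tendsto_of_le_of_le' tendsto_const_nhds
    (ENNReal.tendsto_coe.2 hr) (.of_forall fun _ => zero_le) (hX.mono fun n h => ?_)
  rw [h.measure_eq (p := (· ≠ 0)) (measurableSet_singleton 0).compl]
  exact poissonMeasure_compl_zero_le _

lemma pi_prod_poissonMeasure_singleton {κ : Type*} [Fintype κ] (a b : κ → ℝ≥0)
    (x : κ → ℕ × ℕ) :
    Measure.pi (fun i => Po(a i).prod Po(b i)) {x} =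
      ENNReal.ofReal (∏ i, Po(a i).real {(x i).1} * Po(b i).real {(x i).2}) := by
  rw [← Set.univ_pi_singleton, Measure.pi_pi,
    ENNReal.ofReal_prod_of_nonneg fun i _ => by positivity]
  refine Finset.prod_congr rfl fun i _ => ?_
  rw [← Set.singleton_prod_singleton, Measure.prod_prod, ENNReal.ofReal_mul measureReal_nonneg,
    ofReal_measureReal, ofReal_measureReal]

lemma continuous_pi_prod_poissonMeasure_singleton {κ : Type*} [Fintype κ] (x : κ → ℕ × ℕ) :
    Continuous fun a : κ → ℝ≥0 × ℝ≥0 =>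
      Measure.pi (fun i => Po((a i).1).prod Po((a i).2)) {x} := by
  simp_rw [pi_prod_poissonMeasure_singleton, poissonMeasure_real_singleton]
  exact ENNReal.continuous_ofReal.comp (by fun_prop)

theorem hasLaw_pi_finsetSum_poissonMeasure {ι κ : Type*} [Fintype κ] {T : Finset ι}
    {X : ι → Ω → ℕ} {r : ι → ℝ≥0} (hX : iIndepFun (fun p : ↥T => X p) P)
    (hlaw : ∀ p ∈ T, HasLaw (X p) Po(r p) P) {A : κ → Finset ι}
    (hA : Pairwise (Disjoint on A)) (hAT : ∀ j, A j ⊆ T) :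
    HasLaw (fun ω j => ∑ p ∈ A j, X p ω) (Measure.pi fun j => Po(∑ p ∈ A j, r p)) P := by
  classical
  let t (j : κ) : Finset ↥T := (A j).subtype (· ∈ T)
  have ht : Pairwise (Disjoint on t) := fun j j' hjj' => Finset.disjoint_left.2 fun p hp hp' =>
    Finset.disjoint_left.1 (hA hjj') (Finset.mem_subtype.1 hp) (Finset.mem_subtype.1 hp')
  have hXlaw (p : ↥T) : HasLaw (X p) Po(r p) P := hlaw p p.2
  have hY := (hX.iIndepFun_finsetSum ht fun p => (hXlaw p).aemeasurable).hasLaw_pi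
    fun j => hX.hasLaw_finsetSum_poissonMeasure hXlaw (t j)
  have hsum (j : κ) (ω : Ω) : ∑ p ∈ t j, X p ω = ∑ p ∈ A j, X p ω :=
    Finset.sum_subtype_of_mem (fun p => X p ω) (hAT j)
  simpa [t, Finset.sum_apply, hsum, Finset.sum_subtype_of_mem r (hAT _)] using hY

end Poisson

section Degrees

variable {Ω α κ : Type*} {mΩ : MeasurableSpace Ω} {P : Measure Ω}

def degreeVector (E : α → α → Ω → ℕ) (S : κ → Finset α) (v : κ → α) (ω : Ω) : κ → ℕ × ℕ :=
  fun i => (∑ u ∈ S i, E u (v i) ω, ∑ u ∈ S i, E (v i) u ω)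

theorem hasLaw_degreeVector [Fintype κ] {s R : Finset α} {E : α → α → Ω → ℕ}
    {r : α → α → ℝ≥0} (hE : iIndepFun (fun p : ↥(s ×ˢ s) => E p.val.1 p.val.2) P)
    (hlaw : ∀ a ∈ s, ∀ b ∈ s, HasLaw (E a b) Po(r a b) P) (hR : R ⊆ s) {v : κ → α}
    (hv : Injective v) (hvs : ∀ i, v i ∈ s) (hvR : ∀ i, v i ∉ R) :
    HasLaw (degreeVector E (fun _ => R) v)
      (Measure.pi fun i => Po(∑ u ∈ R, r u (v i)).prod Po(∑ u ∈ R, r (v i) u)) P := by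
  let arcs : κ ⊕ κ → Finset (α × α) := Sum.elim (fun i => R ×ˢ {v i}) (fun i => {v i} ×ˢ R)
  have harcs (j : κ ⊕ κ) : arcs j ⊆ s ×ˢ s := by
    rcases j with i | i <;> intro p hp <;>
      simp only [arcs, Sum.elim_inl, Sum.elim_inr, Finset.mem_product, Finset.mem_singleton]
        at hp ⊢ <;> grind
  have hdisj : Pairwise (Disjoint on arcs) := by
    rintro (i | i) (i' | i') hne <;>
      simp only [onFun, arcs, Sum.elim_inl, Sum.elim_inr, Finset.disjoint_left,
        Finset.mem_product, Finset.mem_singleton] <;> grind [Injective]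
  have hY := hasLaw_pi_finsetSum_poissonMeasure (X := fun p => E p.1 p.2) (r := fun p => r p.1 p.2)
    hE (fun p hp => hlaw _ (Finset.mem_product.1 hp).1 _ (Finset.mem_product.1 hp).2) hdisj harcs
  let M (j : κ ⊕ κ) : Measure ℕ := Po(∑ p ∈ arcs j, r p.1 p.2)
  have hregroup := (measurePreserving_arrowProdEquivProdArrow ℕ ℕ κ (fun i => M (.inl i))
    (fun i => M (.inr i))).symm.comp (measurePreserving_sumPiEquivProdPi M)
  convert hregroup.comp_hasLaw hY using 1
  · ext ω i <;> simp [degreeVector, arcs, MeasurableEquiv.arrowProdEquivProdArrow,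
      Equiv.arrowProdEquivProdArrow, MeasurableEquiv.sumPiEquivProdPi, Equiv.sumPiEquivProdPi]
  · simp [M, arcs]

theorem degreeVector_ne_subset_iUnion_offDiag [DecidableEq α] {E : α → α → Ω → ℕ}
    {s V : Finset α} {v : κ → α} (hvV : ∀ i, v i ∈ V) :
    {ω | degreeVector E (fun i => s.erase (v i)) v ω ≠ degreeVector E (fun _ => s \ V) v ω} ⊆
      ⋃ p ∈ V.offDiag, {ω | E p.1 p.2 ω ≠ 0} := by
  intro ω hω
  by_contra hzero
  simp only [Set.mem_iUnion, Set.mem_ofPred_eq, exists_prop, not_exists, not_and, not_not,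
    Prod.forall, Finset.mem_offDiag] at hzero
  refine hω (funext fun i => Prod.ext ?_ ?_) <;> symm <;>
    refine Finset.sum_sdiff_eq_sum_erase_of_eq_zero (hvV i) fun u hu hne => ?_
  exacts [hzero u (v i) ⟨hu, hvV i, hne⟩, hzero (v i) u ⟨hvV i, hu, hne.symm⟩]

theorem tendsto_measure_degreeVector_ne [DecidableEq α] {γ : Type*} {l : Filter γ}
    {E : γ → α → α → Ω → ℕ} {s : γ → Finset α} {V : Finset α} {v : κ → α}
    (hvV : ∀ i, v i ∈ V)
    (hE : ∀ p ∈ V.offDiag, Tendsto (fun n => P {ω | E n p.1 p.2 ω ≠ 0}) l (𝓝 0)) :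
    Tendsto (fun n => P {ω | degreeVector (E n) (fun i => (s n).erase (v i)) v ω ≠
      degreeVector (E n) (fun _ => s n \ V) v ω}) l (𝓝 0) := by
  refine tendsto_of_tendsto_of_tendsto_of_le_of_le tendsto_const_nhds
    (by simpa using tendsto_finsetSum _ hE) (fun _ => zero_le) fun n => ?_
  exact (measure_mono (degreeVector_ne_subset_iUnion_offDiag hvV)).trans
    (measure_biUnion_finset_le _ _)

end Degrees

end ProbabilityTheory

theorem asymptotic_independence_of_conditional_degrees_general
    {Ω : Type*} [MeasurableSpace Ω] (P : Measure Ω)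
    (w_in w_out : ℕ → ℝ≥0)
    (L : ℕ → ℝ≥0)
    (hLinf : Tendsto (fun N => (L N : ℝ)) atTop atTop)
    (hin : Tendsto (fun N => ((∑ u ∈ Finset.Icc 1 N, w_in u : ℝ≥0) : ℝ) / (L N : ℝ))
      atTop (𝓝 1))
    (hout : Tendsto (fun N => ((∑ u ∈ Finset.Icc 1 N, w_out u : ℝ≥0) : ℝ) / (L N : ℝ))
      atTop (𝓝 1))
    (k : ℕ) (v : Fin k → ℕ) (hv1 : ∀ i, 1 ≤ v i) (hvinj : Function.Injective v)
    (E : ℕ → ℕ → ℕ → Ω → ℕ) (hEmeas : ∀ N a b, Measurable (E N a b))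
    (hEindep : ∀ N, (∀ i, v i ≤ N) → iIndepFun
      (fun p : ↥(Finset.Icc 1 N ×ˢ Finset.Icc 1 N) => E N p.val.1 p.val.2) P)
    (hElaw : ∀ N a b, (∀ i, v i ≤ N) → a ∈ Finset.Icc 1 N → b ∈ Finset.Icc 1 N →
      Measure.map (E N a b) P = poissonMeasure (w_out a * w_in b / L N)) :
    ∀ x : Fin k → ℕ × ℕ,
      Tendsto (fun N =>
          Measure.map (fun ω => fun i : Fin k =>
            ((∑ u ∈ (Finset.Icc 1 N).erase (v i), E N u (v i) ω),
             (∑ u ∈ (Finset.Icc 1 N).erase (v i), E N (v i) u ω))) P {x})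
        atTop
        (𝓝 ((Measure.pi fun i : Fin k =>
          (poissonMeasure (w_in (v i))).prod (poissonMeasure (w_out (v i)))) {x})) := by
  intro x
  set V := Finset.univ.image v
  have hvV i : v i ∈ V := Finset.mem_image_of_mem v (Finset.mem_univ i)
  have hN : ∀ᶠ N in atTop, V ⊆ Finset.Icc 1 N ∧ ∀ i, v i ≤ N := by
    filter_upwards [eventually_ge_atTop (Finset.univ.sup v)] with N hN
    have hvN i : v i ≤ N := (Finset.le_sup (Finset.mem_univ i)).trans hN
    exact ⟨by simp [V, Finset.subset_iff, hv1, hvN], hvN⟩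
  have hlaw N a b (hvN : ∀ i, v i ≤ N) (ha : a ∈ Finset.Icc 1 N) (hb : b ∈ Finset.Icc 1 N) :
      HasLaw (E N a b) Po(w_out a * w_in b / L N) P :=
    ⟨(hEmeas N a b).aemeasurable, hElaw N a b hvN ha hb⟩
  have harc : ∀ p ∈ V.offDiag, Tendsto (fun N => P {ω | E N p.1 p.2 ω ≠ 0}) atTop (𝓝 0) := by
    intro p hp
    obtain ⟨hp1, hp2, -⟩ := Finset.mem_offDiag.1 hp
    exact tendsto_measure_ne_zero_of_hasLaw_poissonMeasure
      (hN.mono fun N h => hlaw N _ _ h.2 (h.1 hp1) (h.1 hp2))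
      (NNReal.tendsto_const_div_atTop hLinf _)
  have hVsub := hN.mono fun N h => h.1
  refine (tendsto_congr fun N => Measure.map_apply (by fun_prop) (measurableSet_singleton x)).2 ?_
  refine tendsto_measure_preimage_of_tendsto_measure_ne
    (tendsto_measure_degreeVector_ne hvV harc) ?_
  refine (((continuous_pi_prod_poissonMeasure_singleton x).tendsto _).comp <| tendsto_pi_nhds.2
    fun i => (NNReal.tendsto_sum_sdiff_mul_div hVsub hLinf hout _).prodMk_nhds
      (NNReal.tendsto_sum_sdiff_mul_div hVsub hLinf hin _)).congr' ?_
  filter_upwards [hN] with N ⟨hVN, hvN⟩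
  have hD := hasLaw_degreeVector (hEindep N hvN) (fun a ha b hb => hlaw N a b hvN ha hb)
    Finset.sdiff_subset hvinj (fun i => hVN (hvV i))
    fun i => Finset.notMem_sdiff_of_mem_right (hvV i)
  simp only [comp_apply, mul_comm (w_in _) (w_out _)]
  rw [← hD.map_eq, Measure.map_apply_of_aemeasurable hD.aemeasurable
    (measurableSet_singleton x)]

/-- **Asymptotic independence of the conditional degrees of finitely many fixed vertices.**
Given a fixed weight sequence `w_in, w_out : ℕ → (0,∞)` and normalisations `L N → ∞` with
`(∑_{u ≤ N} w_in u) / L N → 1` and `(∑_{u ≤ N} w_out u) / L N → 1`, and, for each `N`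
(large enough to contain the distinct fixed vertices `v 1, …, v k ∈ [N] = {1,…,N}`),
independent arc counts `E N a b ~ Poisson(w_out a * w_in b / L N)` for `a, b ∈ [N]`,
the joint law of the in- and outdegrees `((D_in (v i), D_out (v i)))_{i ≤ k}` converges
weakly (here: pointwise on the countable discrete space `(Fin k → ℕ × ℕ)`) to the product
measure `⊗_i (Poisson(w_in (v i)) ⊗ Poisson(w_out (v i)))`; in particular the `2k`
limiting coordinates are independent. -/
theorem asymptotic_independence_of_conditional_degrees
    {Ω : Type*} [MeasurableSpace Ω] (P : Measure Ω) [IsProbabilityMeasure P]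
    (w_in w_out : ℕ → ℝ≥0) (hwin : ∀ a, 0 < w_in a) (hwout : ∀ a, 0 < w_out a)
    (L : ℕ → ℝ≥0) (hLpos : ∀ N, 0 < L N)
    (hLinf : Tendsto (fun N => (L N : ℝ)) atTop atTop)
    (hin : Tendsto (fun N => ((∑ u ∈ Finset.Icc 1 N, w_in u : ℝ≥0) : ℝ) / (L N : ℝ))
      atTop (𝓝 1))
    (hout : Tendsto (fun N => ((∑ u ∈ Finset.Icc 1 N, w_out u : ℝ≥0) : ℝ) / (L N : ℝ))
      atTop (𝓝 1))
    (k : ℕ) (v : Fin k → ℕ) (hv1 : ∀ i, 1 ≤ v i) (hvinj : Function.Injective v)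
    (E : ℕ → ℕ → ℕ → Ω → ℕ) (hEmeas : ∀ N a b, Measurable (E N a b))
    (hEindep : ∀ N, (∀ i, v i ≤ N) → iIndepFun
      (fun p : ↥(Finset.Icc 1 N ×ˢ Finset.Icc 1 N) => E N p.val.1 p.val.2) P)
    (hElaw : ∀ N a b, (∀ i, v i ≤ N) → a ∈ Finset.Icc 1 N → b ∈ Finset.Icc 1 N →
      Measure.map (E N a b) P = poissonMeasure (w_out a * w_in b / L N)) :
    ∀ x : Fin k → ℕ × ℕ,
      Tendsto (fun N =>
          Measure.map (fun ω => fun i : Fin k =>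
            ((∑ u ∈ (Finset.Icc 1 N).erase (v i), E N u (v i) ω),
             (∑ u ∈ (Finset.Icc 1 N).erase (v i), E N (v i) u ω))) P {x})
        atTop
        (𝓝 ((Measure.pi fun i : Fin k =>
          (poissonMeasure (w_in (v i))).prod (poissonMeasure (w_out (v i)))) {x})) :=
  asymptotic_independence_of_conditional_degrees_general P w_in w_out L hLinf hin hout k v hv1 hvinj
    E hEmeas hEindep hElaw
end
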